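/- For any two d×d real matrices X and Y with σ_min(X) + σ_min(Y) > 0, the polar factor map P satisfies ‖P(X) − P(Y)‖ ≤ 2‖X − Y‖/(σ_min(X) + σ_min(Y)) in operator norm and ‖P(X) − P(Y)‖_F ≤ 2‖X − Y‖_F/(σ_min(X) + σ_min(Y)) in Frobenius norm. -/

import Mathlib

open MeasureTheory Matrix Filter

namespace GOPP

/-- Frobenius norm of a real matrix. -/
noncomputable def frob {α β : Type*} [Fintype α] [Fintype β] (X : Matrix α β ℝ) : ℝ :=
  Real.sqrt (∑ i, ∑ j, X i j ^ 2)

/-- Euclidean norm of a vector. -/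
noncomputable def vnorm {β : Type*} [Fintype β] (v : β → ℝ) : ℝ :=
  Real.sqrt (∑ j, v j ^ 2)

/-- Operator (spectral) norm: the supremum of ‖Xu‖ over unit vectors u. -/
noncomputable def opNorm {α β : Type*} [Fintype α] [Fintype β] (X : Matrix α β ℝ) : ℝ :=
  sSup {r : ℝ | ∃ u : β → ℝ, vnorm u = 1 ∧ r = vnorm (X.mulVec u)}

/-- Smallest singular value: the infimum of ‖uᵀX‖ over unit vectors u (for a d×m matrix
with d ≤ m this is the d-th largest singular value; for square matrices it is σ_min). -/
noncomputable def sigmaMin {α β : Type*} [Fintype α] [Fintype β] (X : Matrix α β ℝ) : ℝ :=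
  sInf {r : ℝ | ∃ u : α → ℝ, vnorm u = 1 ∧ r = vnorm (Matrix.vecMul u X)}

/-- Condition number κ = σ_max/σ_min. -/
noncomputable def kappa {d m : ℕ} (A : Matrix (Fin d) (Fin m) ℝ) : ℝ :=
  opNorm A / sigmaMin A

/-- Q is an orthogonal matrix. -/
def IsOrth {d : ℕ} (Q : Matrix (Fin d) (Fin d) ℝ) : Prop :=
  Qᵀ * Q = 1 ∧ Q * Qᵀ = 1

/-- Nuclear norm, via the dual characterization ‖M‖_* = max_{Q ∈ O(d)} ⟨Q, M⟩. -/
noncomputable def nuclearNorm {d : ℕ} (M : Matrix (Fin d) (Fin d) ℝ) : ℝ :=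
  sSup {r : ℝ | ∃ Q : Matrix (Fin d) (Fin d) ℝ, IsOrth Q ∧ r = Matrix.trace (Qᵀ * M)}

/-- The i-th d×k block of an (nd)×k block matrix. -/
def blk {n d k : ℕ} (S : Matrix (Fin n × Fin d) (Fin k) ℝ) (i : Fin n) :
    Matrix (Fin d) (Fin k) ℝ :=
  Matrix.of fun a b => S (i, a) b

/-- The i-th diagonal d×d block of an (nd)×(nd) matrix. -/
def dblk {n d : ℕ} (G : Matrix (Fin n × Fin d) (Fin n × Fin d) ℝ) (i : Fin n) :
    Matrix (Fin d) (Fin d) ℝ :=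
  Matrix.of fun a b => G (i, a) (i, b)

/-- S ∈ O(d)^{⊗n}: each of the n d×d blocks of S is orthogonal. -/
def OrthBlocks {n d : ℕ} (S : Matrix (Fin n × Fin d) (Fin d) ℝ) : Prop :=
  ∀ i, IsOrth (blk S i)

/-- Z ∈ ℝ^{nd×d}: the vertical stack of n copies of I_d. -/
def ZStack (n d : ℕ) : Matrix (Fin n × Fin d) (Fin d) ℝ :=
  Matrix.of fun p j => if p.2 = j then 1 else 0

/-- Vertical stack of n given d×k matrices. -/
def stack {n d k : ℕ} (B : Fin n → Matrix (Fin d) (Fin k) ℝ) :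
    Matrix (Fin n × Fin d) (Fin k) ℝ :=
  Matrix.of fun p b => B p.1 p.2 b

/-- d_F(X,Y) = min_{Q ∈ O(d)} ‖X − YQ‖_F. -/
noncomputable def dF {n d : ℕ} (X Y : Matrix (Fin n × Fin d) (Fin d) ℝ) : ℝ :=
  sInf {r : ℝ | ∃ Q, IsOrth Q ∧ r = frob (X - Y * Q)}

/-- R is a polar factor P(X) of X: an orthogonal global minimizer of ‖X − Q‖_F over O(d). -/
def IsPolar {d : ℕ} (X R : Matrix (Fin d) (Fin d) ℝ) : Prop :=
  IsOrth R ∧ ∀ Q : Matrix (Fin d) (Fin d) ℝ, IsOrth Q → frob (X - R) ≤ frob (X - Q)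

/-- S = P_n(X): blockwise polar factor. -/
def IsPolarBlocks {n d : ℕ} (X S : Matrix (Fin n × Fin d) (Fin d) ℝ) : Prop :=
  ∀ i, IsPolar (blk X i) (blk S i)

/-- U collects (an orthonormal basis of the span of) the top d left singular vectors of D:
U has orthonormal columns and maximizes the Ky Fan quantity trace(Uᵀ(DDᵀ)U). -/
def IsTopSingVecs {N : Type*} [Fintype N] {d m : ℕ} (D : Matrix N (Fin m) ℝ)
    (U : Matrix N (Fin d) ℝ) : Prop :=
  Uᵀ * U = 1 ∧ ∀ Q : Matrix N (Fin d) ℝ, Qᵀ * Q = 1 →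
    Matrix.trace (Qᵀ * (D * Dᵀ) * Q) ≤ Matrix.trace (Uᵀ * (D * Dᵀ) * U)

/-- (U, S, V) is a top-d singular triple of D: orthonormal U, V, diagonal nonnegative S,
DV = US, DᵀU = VS, and U spans a top-d left singular subspace. -/
def IsSVDTriple {N : Type*} [Fintype N] {d m : ℕ} (D : Matrix N (Fin m) ℝ)
    (U : Matrix N (Fin d) ℝ) (S : Matrix (Fin d) (Fin d) ℝ)
    (V : Matrix (Fin m) (Fin d) ℝ) : Prop :=
  Vᵀ * V = 1 ∧ (∀ a b, a ≠ b → S a b = 0) ∧ (∀ a, 0 ≤ S a a) ∧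
    D * V = U * S ∧ Dᵀ * U = V * S ∧ IsTopSingVecs D U

/-- The generalized power method sequence with spectral initialization, run on the data
matrix D (so with C = DDᵀ): S⁰ = P_n(U) for top singular vectors U of D, and
S^{t+1} = P_n(C Sᵗ). -/
def IsGPM {n d m : ℕ} (D : Matrix (Fin n × Fin d) (Fin m) ℝ)
    (S : ℕ → Matrix (Fin n × Fin d) (Fin d) ℝ) : Prop :=
  (∃ U, IsTopSingVecs D U ∧ IsPolarBlocks U (S 0)) ∧
    ∀ t, IsPolarBlocks (D * Dᵀ * S t) (S (t + 1))

/-- W^(i): W with its i-th block row replaced by 0. -/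
def mask {n d m : ℕ} (W : Matrix (Fin n × Fin d) (Fin m) ℝ) (i : Fin n) :
    Matrix (Fin n × Fin d) (Fin m) ℝ :=
  Matrix.of fun p b => if p.1 = i then 0 else W p b

/-- The noise matrix Δ = WAᵀZᵀ + ZAWᵀ + σWWᵀ. -/
noncomputable def delta {n d m : ℕ} (A : Matrix (Fin d) (Fin m) ℝ)
    (W : Matrix (Fin n × Fin d) (Fin m) ℝ) (σ : ℝ) :
    Matrix (Fin n × Fin d) (Fin n × Fin d) ℝ :=
  W * Aᵀ * (ZStack n d)ᵀ + ZStack n d * A * Wᵀ + σ • (W * Wᵀ)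

/-- The i-th block column Δ_i = WAᵀ + ZAW_iᵀ + σWW_iᵀ of Δ. -/
noncomputable def deltaCol {n d m : ℕ} (A : Matrix (Fin d) (Fin m) ℝ)
    (W : Matrix (Fin n × Fin d) (Fin m) ℝ) (σ : ℝ) (i : Fin n) :
    Matrix (Fin n × Fin d) (Fin d) ℝ :=
  W * Aᵀ + ZStack n d * A * (blk W i)ᵀ + σ • (W * (blk W i)ᵀ)

/-- The operator L S = C S/(n‖A‖²) with C = ZAAᵀZᵀ + σΔ. -/
noncomputable def Lop {n d m : ℕ} (A : Matrix (Fin d) (Fin m) ℝ)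
    (W : Matrix (Fin n × Fin d) (Fin m) ℝ) (σ : ℝ)
    (S : Matrix (Fin n × Fin d) (Fin d) ℝ) : Matrix (Fin n × Fin d) (Fin d) ℝ :=
  ((n : ℝ) * opNorm A ^ 2)⁻¹ •
    ((ZStack n d * A * Aᵀ * (ZStack n d)ᵀ + σ • delta A W σ) * S)

/-- √(nd) + √m + √(2γ n log n). -/
noncomputable def bnd1 (n d m : ℕ) (γ : ℝ) : ℝ :=
  Real.sqrt ((n : ℝ) * d) + Real.sqrt (m : ℝ) + Real.sqrt (2 * γ * n * Real.log n)

/-- √(nd) + √m + √(2γ log n). -/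
noncomputable def bnd2 (n d m : ℕ) (γ : ℝ) : ℝ :=
  Real.sqrt ((n : ℝ) * d) + Real.sqrt (m : ℝ) + Real.sqrt (2 * γ * Real.log n)

/-- The basin of attraction N_ε. -/
def memNeps {n d : ℕ} (ε : ℝ) (S : Matrix (Fin n × Fin d) (Fin d) ℝ) : Prop :=
  OrthBlocks S ∧ dF S (ZStack n d) ≤ ε * Real.sqrt ((n : ℝ) * d)

/-- The basin of attraction N_{ξ,∞}. -/
def memNxi {n d m : ℕ} (W : Matrix (Fin n × Fin d) (Fin m) ℝ) (γ ξ : ℝ)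
    (S : Matrix (Fin n × Fin d) (Fin d) ℝ) : Prop :=
  OrthBlocks S ∧ ∀ i, frob (blk W i * Wᵀ * S) ≤ ξ * Real.sqrt (d : ℝ) * bnd1 n d m γ ^ 2

/-- The distribution of a matrix with i.i.d. standard Gaussian N(0,1) entries. -/
noncomputable def stdGaussian (ι κ : Type*) [Fintype ι] [Fintype κ] :
    Measure (ι → κ → ℝ) :=
  Measure.pi fun _ : ι => Measure.pi fun _ : κ => ProbabilityTheory.gaussianReal 0 1


/-!
Write `X = U H` and `Y = V K` with `U = P(X)`, `V = P(Y)`. Since `Q ↦ tr(Qᵀ X)` is maximal over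
`O(d)` at `Q = U`, testing against reflections and rotations shows that `H = Uᵀ X` is symmetric
positive semidefinite; its eigenvalues are then singular values of `X`, hence `≥ σ_min(X)`.
The matrix `Z = 1 - Uᵀ V`, with `U - V = U Z`, solves the Sylvester equation
`H Z + Z K = Uᵀ (X - Y) - (X - Y)ᵀ V`, whose right side has norm at most `2 ‖X - Y‖`.
In eigenbases of `H` and `K` this reads `Zᵢⱼ = Cᵢⱼ / (λᵢ + μⱼ)`, and `λᵢ + μⱼ ≥ σ_min(X) + σ_min(Y)`
bounds `Z` entrywise, hence in Frobenius norm, and through `1 / c = ∫₀¹ s^(c - 1) ds` also in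
operator norm.
-/

open scoped Matrix.Norms.L2Operator

section Euclidean
variable {α β : Type*} [Fintype α] [Fintype β]

lemma vnorm_eq_norm (v : β → ℝ) : vnorm v = ‖WithLp.toLp 2 v‖ := by
  simp [vnorm, EuclideanSpace.norm_eq]

lemma vnorm_nonneg (v : β → ℝ) : 0 ≤ vnorm v := Real.sqrt_nonneg _

lemma vnorm_sq (v : β → ℝ) : vnorm v ^ 2 = v ⬝ᵥ v := by
  rw [vnorm, Real.sq_sqrt (by positivity)]
  simp [dotProduct, sq]

lemma vnorm_smul (c : ℝ) (v : β → ℝ) : vnorm (c • v) = |c| * vnorm v := by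
  simp [vnorm_eq_norm, WithLp.toLp_smul, norm_smul]

lemma vnorm_sub_le (v w : β → ℝ) : vnorm (v - w) ≤ vnorm v + vnorm w := by
  simpa [vnorm_eq_norm] using norm_sub_le (WithLp.toLp 2 v : EuclideanSpace ℝ β) (WithLp.toLp 2 w)

lemma dotProduct_le_vnorm_mul (v w : β → ℝ) : v ⬝ᵥ w ≤ vnorm v * vnorm w := by
  rw [vnorm_eq_norm, vnorm_eq_norm]
  convert real_inner_le_norm (WithLp.toLp 2 v : EuclideanSpace ℝ β) (WithLp.toLp 2 w) using 1
  simp [EuclideanSpace.inner_eq_star_dotProduct, dotProduct_comm]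

variable [DecidableEq β]

lemma vnorm_mulVec_of_transpose_mul_self {Q : Matrix α β ℝ} (hQ : Qᵀ * Q = 1) (u : β → ℝ) :
    vnorm (Q *ᵥ u) = vnorm u := by
  refine (sq_eq_sq₀ (vnorm_nonneg _) (vnorm_nonneg _)).1 ?_
  rw [vnorm_sq, vnorm_sq, dotProduct_mulVec, ← mulVec_transpose, mulVec_mulVec, hQ, one_mulVec]

lemma vnorm_mulVec_le (M : Matrix α β ℝ) (u : β → ℝ) : vnorm (M *ᵥ u) ≤ ‖M‖ * vnorm u := by
  simpa [vnorm_eq_norm] using M.l2_opNorm_mulVec (WithLp.toLp 2 u)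

lemma norm_le_of_vnorm_mulVec_le {M : Matrix α β ℝ} {B : ℝ} (hB : 0 ≤ B)
    (h : ∀ u, vnorm (M *ᵥ u) ≤ B * vnorm u) : ‖M‖ ≤ B := by
  rw [l2_opNorm_def]
  refine ContinuousLinearMap.opNorm_le_bound _ hB fun u => ?_
  simpa [vnorm_eq_norm, toLpLin_apply] using h u.ofLp

lemma opNorm_eq_norm (M : Matrix α β ℝ) : opNorm M = ‖M‖ := by
  rw [l2_opNorm_def, ← ContinuousLinearMap.sSup_sphere_eq_norm]
  refine congrArg sSup (Set.ext fun r => ⟨?_, ?_⟩)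
  · rintro ⟨u, hu, rfl⟩
    exact ⟨WithLp.toLp 2 u, by simpa [vnorm_eq_norm] using hu, by
      simp [vnorm_eq_norm, toLpLin_apply]⟩
  · rintro ⟨u, hu, rfl⟩
    exact ⟨u.ofLp, by simpa [vnorm_eq_norm] using hu, by simp [vnorm_eq_norm, toLpLin_apply]⟩

lemma dotProduct_mulVec_le (M : Matrix α β ℝ) (v : α → ℝ) (u : β → ℝ) :
    v ⬝ᵥ (M *ᵥ u) ≤ ‖M‖ * (vnorm v * vnorm u) :=
  calc v ⬝ᵥ (M *ᵥ u) ≤ vnorm v * vnorm (M *ᵥ u) := dotProduct_le_vnorm_mul _ _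
    _ ≤ vnorm v * (‖M‖ * vnorm u) := by gcongr; exacts [vnorm_nonneg v, vnorm_mulVec_le M u]
    _ = ‖M‖ * (vnorm v * vnorm u) := by ring

lemma norm_le_of_dotProduct_mulVec_le {M : Matrix α β ℝ} {B : ℝ} (hB : 0 ≤ B)
    (h : ∀ v u, v ⬝ᵥ (M *ᵥ u) ≤ B * (vnorm v * vnorm u)) : ‖M‖ ≤ B := by
  refine norm_le_of_vnorm_mulVec_le hB fun u => ?_
  rcases (vnorm_nonneg (M *ᵥ u)).eq_or_lt with h0 | hpos
  · rw [← h0]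
    exact mul_nonneg hB (vnorm_nonneg u)
  · refine le_of_mul_le_mul_left ?_ hpos
    have := h (M *ᵥ u) u
    rw [← vnorm_sq] at this
    linarith

end Euclidean

section Frobenius
variable {α β : Type*} [Fintype α] [Fintype β]

lemma frob_nonneg (M : Matrix α β ℝ) : 0 ≤ frob M := Real.sqrt_nonneg _

lemma frob_eq_vnorm (M : Matrix α β ℝ) : frob M = vnorm fun p : α × β => M p.1 p.2 := by
  rw [frob, vnorm, Fintype.sum_prod_type]

lemma frob_sub_le (A B : Matrix α β ℝ) : frob (A - B) ≤ frob A + frob B := by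
  simp only [frob_eq_vnorm]
  exact vnorm_sub_le _ _

lemma frob_transpose (M : Matrix α β ℝ) : frob Mᵀ = frob M := by
  rw [frob, frob, Finset.sum_comm]
  rfl

lemma frob_sq (M : Matrix α β ℝ) : frob M ^ 2 = trace (Mᵀ * M) := by
  rw [frob, Real.sq_sqrt (by positivity), Finset.sum_comm]
  simp [trace, mul_apply, sq]

lemma frob_eq_sqrt_trace (M : Matrix α β ℝ) : frob M = Real.sqrt (trace (Mᵀ * M)) := by
  rw [← frob_sq, Real.sqrt_sq (frob_nonneg M)]

lemma frob_mul_of_transpose_mul_self {γ : Type*} [Fintype γ] [DecidableEq α] {Q : Matrix γ α ℝ}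
    (hQ : Qᵀ * Q = 1) (M : Matrix α β ℝ) : frob (Q * M) = frob M := by
  rw [frob_eq_sqrt_trace, frob_eq_sqrt_trace, transpose_mul, Matrix.mul_assoc,
    ← Matrix.mul_assoc Qᵀ, hQ, Matrix.one_mul]

lemma frob_mul_of_mul_transpose_self {γ : Type*} [Fintype γ] [DecidableEq β] {Q : Matrix β γ ℝ}
    (hQ : Q * Qᵀ = 1) (M : Matrix α β ℝ) : frob (M * Q) = frob M := by
  rw [← frob_transpose, transpose_mul,
    frob_mul_of_transpose_mul_self (by rwa [transpose_transpose]), frob_transpose]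

lemma frob_le_mul_of_abs_le {A B : Matrix α β ℝ} {c : ℝ} (hc : 0 ≤ c)
    (h : ∀ i j, |A i j| ≤ c * |B i j|) : frob A ≤ c * frob B := by
  rw [frob, frob, ← Real.sqrt_sq hc, ← Real.sqrt_mul (sq_nonneg c), Finset.mul_sum]
  refine Real.sqrt_le_sqrt (Finset.sum_le_sum fun i _ => ?_)
  rw [Finset.mul_sum]
  refine Finset.sum_le_sum fun j _ => ?_
  rw [← sq_abs, ← sq_abs (B i j), ← mul_pow]
  exact pow_le_pow_left₀ (abs_nonneg _) (h i j) 2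

end Frobenius

section IntegralRpow

lemma integral_rpow_sub_one {c : ℝ} (hc : 0 < c) : ∫ s in (0 : ℝ)..1, s ^ (c - 1) = 1 / c := by
  rw [integral_rpow (Or.inl (by linarith)), sub_add_cancel, Real.one_rpow,
    Real.zero_rpow hc.ne', sub_zero]

variable {ι : Type*} [Fintype ι] {e : ι → ℝ}

lemma intervalIntegrable_sum_mul_rpow (he : ∀ i, 0 < e i) (c : ι → ℝ) :
    IntervalIntegrable (fun s : ℝ => ∑ i, c i * s ^ (e i - 1)) MeasureTheory.volume 0 1 := by
  simpa only [Finset.sum_fn] using IntervalIntegrable.sum _ fun i _ =>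
    (intervalIntegral.intervalIntegrable_rpow' (by linarith [he i])).const_mul (c i)

lemma integral_sum_mul_rpow (he : ∀ i, 0 < e i) (c : ι → ℝ) :
    ∫ s in (0 : ℝ)..1, ∑ i, c i * s ^ (e i - 1) = ∑ i, c i / e i := by
  rw [intervalIntegral.integral_finsetSum fun i _ =>
    (intervalIntegral.intervalIntegrable_rpow' (by linarith [he i])).const_mul (c i)]
  refine Finset.sum_congr rfl fun i _ => ?_
  rw [intervalIntegral.integral_const_mul, integral_rpow_sub_one (he i), mul_one_div]

end IntegralRpow

section SchurMultiplier
variable {α β : Type*} [Fintype α] [Fintype β] {lam : α → ℝ} {mu : β → ℝ} {a b : ℝ}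

lemma dotProduct_mulVec_of_div_add (C : Matrix α β ℝ) (v : α → ℝ) (u : β → ℝ) :
    v ⬝ᵥ ((Matrix.of fun i j => C i j / (lam i + mu j)) *ᵥ u) =
      ∑ p : α × β, v p.1 * C p.1 p.2 * u p.2 / (lam p.1 + mu p.2) := by
  simp only [dotProduct, mulVec, of_apply, Finset.mul_sum, Fintype.sum_prod_type]
  exact Finset.sum_congr rfl fun i _ => Finset.sum_congr rfl fun j _ => by ring

lemma frob_of_div_add_le (hlam : ∀ i, a ≤ lam i) (hmu : ∀ j, b ≤ mu j) (hab : 0 < a + b)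
    (C : Matrix α β ℝ) :
    frob (Matrix.of fun i j => C i j / (lam i + mu j)) ≤ frob C / (a + b) := by
  rw [div_eq_inv_mul]
  refine frob_le_mul_of_abs_le (by positivity) fun i j => ?_
  rw [of_apply, abs_div, div_eq_inv_mul, abs_of_pos (by linarith [hlam i, hmu j])]
  gcongr
  exacts [hlam i, hmu j]

lemma norm_diagonal_rpow_le_one {ι : Type*} [Fintype ι] [DecidableEq ι] {s : ℝ}
    (hs0 : 0 ≤ s) (hs1 : s ≤ 1) {e : ι → ℝ} (he : ∀ i, 0 ≤ e i) :
    ‖(diagonal fun i => s ^ e i : Matrix ι ι ℝ)‖ ≤ 1 := by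
  rw [l2_opNorm_diagonal, pi_norm_le_iff_of_nonneg zero_le_one]
  intro i
  rw [Real.norm_of_nonneg (by positivity)]
  exact Real.rpow_le_one hs0 hs1 (he i)

variable [DecidableEq α] [DecidableEq β]

lemma sum_mul_rpow_le (hlam : ∀ i, a ≤ lam i) (hmu : ∀ j, b ≤ mu j) (C : Matrix α β ℝ)
    (v : α → ℝ) (u : β → ℝ) {s : ℝ} (hs : s ∈ Set.Ioo (0 : ℝ) 1) :
    ∑ p : α × β, v p.1 * C p.1 p.2 * u p.2 * s ^ (lam p.1 + mu p.2 - 1) ≤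
      ‖C‖ * (vnorm v * vnorm u) * s ^ (a + b - 1) := by
  obtain ⟨hs0, hs1⟩ := hs
  set Dl : Matrix α α ℝ := diagonal fun i => s ^ (lam i - a)
  set Dm : Matrix β β ℝ := diagonal fun j => s ^ (mu j - b)
  have hsum : ∑ p : α × β, v p.1 * C p.1 p.2 * u p.2 * s ^ (lam p.1 + mu p.2 - 1) =
      s ^ (a + b - 1) * (v ⬝ᵥ ((Dl * C * Dm) *ᵥ u)) := by
    have hrpow : ∀ i j, s ^ (lam i + mu j - 1) =
        s ^ (a + b - 1) * (s ^ (lam i - a) * s ^ (mu j - b)) := fun i j => by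
      rw [← Real.rpow_add hs0, ← Real.rpow_add hs0]
      ring_nf
    simp only [hrpow, dotProduct, mulVec, Dl, Dm, diagonal_mul, mul_diagonal, Finset.mul_sum,
      Fintype.sum_prod_type]
    exact Finset.sum_congr rfl fun i _ => Finset.sum_congr rfl fun j _ => by ring
  have hnorm : ‖Dl * C * Dm‖ ≤ ‖C‖ :=
    calc ‖Dl * C * Dm‖ ≤ ‖Dl‖ * ‖C‖ * ‖Dm‖ :=
          (l2_opNorm_mul _ _).trans (mul_le_mul_of_nonneg_right (l2_opNorm_mul _ _) (norm_nonneg _))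
      _ ≤ 1 * ‖C‖ * 1 := by
          gcongr
          exacts [norm_diagonal_rpow_le_one hs0.le hs1.le fun i => sub_nonneg.2 (hlam i),
            norm_diagonal_rpow_le_one hs0.le hs1.le fun j => sub_nonneg.2 (hmu j)]
      _ = ‖C‖ := by ring
  have hdot : v ⬝ᵥ ((Dl * C * Dm) *ᵥ u) ≤ ‖C‖ * (vnorm v * vnorm u) :=
    (dotProduct_mulVec_le _ v u).trans
      (mul_le_mul_of_nonneg_right hnorm (mul_nonneg (vnorm_nonneg v) (vnorm_nonneg u)))
  rw [hsum, mul_comm _ (s ^ (a + b - 1))]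
  exact mul_le_mul_of_nonneg_left hdot (by positivity)

/-- `1 / (λᵢ + μⱼ) = ∫₀¹ s^(λᵢ - a) s^(a + b - 1) s^(μⱼ - b) ds`, and for each `s` the integrand
contracts `C` by two diagonal matrices of norm at most one. -/
lemma norm_of_div_add_le (hlam : ∀ i, a ≤ lam i) (hmu : ∀ j, b ≤ mu j) (hab : 0 < a + b)
    (C : Matrix α β ℝ) :
    ‖Matrix.of fun i j => C i j / (lam i + mu j)‖ ≤ ‖C‖ / (a + b) := by
  have hpos : ∀ p : α × β, 0 < lam p.1 + mu p.2 := fun p => by linarith [hlam p.1, hmu p.2]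
  refine norm_le_of_dotProduct_mulVec_le (by positivity) fun v u => ?_
  calc v ⬝ᵥ ((Matrix.of fun i j => C i j / (lam i + mu j)) *ᵥ u)
      = ∫ s in (0 : ℝ)..1,
          ∑ p : α × β, v p.1 * C p.1 p.2 * u p.2 * s ^ (lam p.1 + mu p.2 - 1) := by
        rw [dotProduct_mulVec_of_div_add]
        exact (integral_sum_mul_rpow hpos fun p => v p.1 * C p.1 p.2 * u p.2).symm
    _ ≤ ∫ s in (0 : ℝ)..1, ‖C‖ * (vnorm v * vnorm u) * s ^ (a + b - 1) :=
        intervalIntegral.integral_mono_on_of_le_Ioo zero_le_one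
          (intervalIntegrable_sum_mul_rpow hpos fun p => v p.1 * C p.1 p.2 * u p.2)
          ((intervalIntegral.intervalIntegrable_rpow' (by linarith)).const_mul _)
          fun s hs => sum_mul_rpow_le hlam hmu C v u hs
    _ = ‖C‖ / (a + b) * (vnorm v * vnorm u) := by
        rw [intervalIntegral.integral_const_mul, integral_rpow_sub_one hab]
        ring

end SchurMultiplier

section Householder
variable {n : Type*} [Fintype n]

lemma vecMulVec_mul_vecMulVec (a b c e : n → ℝ) :
    vecMulVec a b * vecMulVec c e = (b ⬝ᵥ c) • vecMulVec a e := by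
  ext i j
  simp only [mul_apply, vecMulVec_apply, Matrix.smul_apply, dotProduct, smul_eq_mul, Finset.sum_mul]
  exact Finset.sum_congr rfl fun k _ => by ring

lemma trace_vecMulVec_mul (a b : n → ℝ) (M : Matrix n n ℝ) :
    trace (vecMulVec a b * M) = b ⬝ᵥ (M *ᵥ a) := by
  simp only [trace, diag, mul_apply, vecMulVec_apply, dotProduct, mulVec, Finset.mul_sum]
  rw [Finset.sum_comm]
  exact Finset.sum_congr rfl fun k _ => Finset.sum_congr rfl fun i _ => by ring

variable [DecidableEq n]

/-- For `w = 0` this is `1`, as `2 / 0 = 0`; so `householder w` is orthogonal for every `w`. -/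
noncomputable def householder (w : n → ℝ) : Matrix n n ℝ :=
  1 - (2 / (w ⬝ᵥ w)) • vecMulVec w w

lemma householder_transpose (w : n → ℝ) : (householder w)ᵀ = householder w := by
  simp [householder, transpose_sub, transpose_smul, transpose_vecMulVec]

lemma householder_mul_self (w : n → ℝ) : householder w * householder w = 1 := by
  simp only [householder, sub_mul, mul_sub, Matrix.one_mul, Matrix.mul_one, Matrix.smul_mul,
    Matrix.mul_smul, vecMulVec_mul_vecMulVec, smul_smul]
  rw [← sub_eq_zero]
  field_simp
  module

lemma trace_householder_mul (w : n → ℝ) (M : Matrix n n ℝ) :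
    trace (householder w * M) = trace M - 2 / (w ⬝ᵥ w) * (w ⬝ᵥ (M *ᵥ w)) := by
  simp [householder, sub_mul, trace_sub, trace_vecMulVec_mul]

lemma trace_householder_mul_householder_mul (u w : n → ℝ) (M : Matrix n n ℝ) :
    trace (householder u * householder w * M) =
      trace M - 2 / (u ⬝ᵥ u) * (u ⬝ᵥ (M *ᵥ u)) - 2 / (w ⬝ᵥ w) * (w ⬝ᵥ (M *ᵥ w))
        + 2 / (u ⬝ᵥ u) * (2 / (w ⬝ᵥ w)) * (u ⬝ᵥ w) * (w ⬝ᵥ (M *ᵥ u)) := by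
  simp only [householder, sub_mul, mul_sub, Matrix.one_mul, Matrix.mul_one, Matrix.smul_mul,
    Matrix.mul_smul, vecMulVec_mul_vecMulVec, smul_smul, trace_sub, trace_smul,
    trace_vecMulVec_mul, smul_eq_mul]
  ring

end Householder

section Orthogonal
variable {d : ℕ}

lemma isOrth_mul {P Q : Matrix (Fin d) (Fin d) ℝ} (hP : IsOrth P) (hQ : IsOrth Q) :
    IsOrth (P * Q) := by
  constructor
  · rw [transpose_mul, Matrix.mul_assoc, ← Matrix.mul_assoc Pᵀ, hP.1, Matrix.one_mul, hQ.1]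
  · rw [transpose_mul, Matrix.mul_assoc, ← Matrix.mul_assoc Q, hQ.2, Matrix.one_mul, hP.2]

lemma IsOrth.transpose {Q : Matrix (Fin d) (Fin d) ℝ} (hQ : IsOrth Q) : IsOrth Qᵀ := by
  rw [IsOrth, transpose_transpose]
  exact hQ.symm

lemma isOrth_householder (w : Fin d → ℝ) : IsOrth (householder w) := by
  rw [IsOrth, householder_transpose]
  exact ⟨householder_mul_self w, householder_mul_self w⟩

lemma IsOrth.norm_le_one {Q : Matrix (Fin d) (Fin d) ℝ} (hQ : IsOrth Q) : ‖Q‖ ≤ 1 :=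
  norm_le_of_vnorm_mulVec_le zero_le_one fun u => by
    rw [vnorm_mulVec_of_transpose_mul_self hQ.1, one_mul]

lemma norm_mul_mul_le_of_isOrth {P Q : Matrix (Fin d) (Fin d) ℝ} (hP : IsOrth P) (hQ : IsOrth Q)
    (M : Matrix (Fin d) (Fin d) ℝ) : ‖P * M * Q‖ ≤ ‖M‖ :=
  calc ‖P * M * Q‖ ≤ ‖P‖ * ‖M‖ * ‖Q‖ :=
        (l2_opNorm_mul _ _).trans (mul_le_mul_of_nonneg_right (l2_opNorm_mul _ _) (norm_nonneg _))
    _ ≤ 1 * ‖M‖ * 1 := by gcongr; exacts [hP.norm_le_one, hQ.norm_le_one]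
    _ = ‖M‖ := by ring

lemma frob_mul_mul_of_isOrth {P Q : Matrix (Fin d) (Fin d) ℝ} (hP : IsOrth P) (hQ : IsOrth Q)
    (M : Matrix (Fin d) (Fin d) ℝ) : frob (P * M * Q) = frob M := by
  rw [frob_mul_of_mul_transpose_self hQ.2, frob_mul_of_transpose_mul_self hP.1]

lemma norm_transpose_mul_sub_le {U V : Matrix (Fin d) (Fin d) ℝ} (hU : IsOrth U) (hV : IsOrth V)
    (E : Matrix (Fin d) (Fin d) ℝ) : ‖Uᵀ * E - Eᵀ * V‖ ≤ 2 * ‖E‖ := by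
  have hEt : ‖Eᵀ‖ = ‖E‖ := by
    rw [← conjTranspose_eq_transpose_of_trivial, l2_opNorm_conjTranspose]
  calc ‖Uᵀ * E - Eᵀ * V‖ ≤ ‖Uᵀ * E‖ + ‖Eᵀ * V‖ := norm_sub_le _ _
    _ ≤ ‖Uᵀ‖ * ‖E‖ + ‖Eᵀ‖ * ‖V‖ := add_le_add (l2_opNorm_mul _ _) (l2_opNorm_mul _ _)
    _ ≤ 1 * ‖E‖ + ‖E‖ * 1 := by
        rw [hEt]
        gcongr
        exacts [hU.transpose.norm_le_one, hV.norm_le_one]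
    _ = 2 * ‖E‖ := by ring

lemma frob_transpose_mul_sub_le {U V : Matrix (Fin d) (Fin d) ℝ} (hU : IsOrth U) (hV : IsOrth V)
    (E : Matrix (Fin d) (Fin d) ℝ) : frob (Uᵀ * E - Eᵀ * V) ≤ 2 * frob E :=
  calc frob (Uᵀ * E - Eᵀ * V) ≤ frob (Uᵀ * E) + frob (Eᵀ * V) := frob_sub_le _ _
    _ = 2 * frob E := by
        rw [frob_mul_of_transpose_mul_self hU.transpose.1, frob_mul_of_mul_transpose_self hV.2,
          frob_transpose]
        ring

end Orthogonal

lemma eq_zero_of_forall_mul_le_sq_mul {x K : ℝ} (h : ∀ t : ℝ, t * x ≤ t ^ 2 * K) : x = 0 := by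
  have hmin : IsLocalMin (fun t : ℝ => t ^ 2 * K - t * x) 0 :=
    Filter.Eventually.of_forall fun t => by simpa using h t
  have hderiv : HasDerivAt (fun t : ℝ => t ^ 2 * K - t * x) (-x) 0 :=
    ((((hasDerivAt_id' (0 : ℝ)).pow 2).mul_const K).sub
      ((hasDerivAt_id' 0).mul_const x)).congr_deriv (by simp)
  simpa using hmin.hasDerivAt_eq_zero hderiv

section TraceMaximal
variable {d : ℕ} {H : Matrix (Fin d) (Fin d) ℝ}

lemma dotProduct_mulVec_self_nonneg_of_trace_mul_le
    (hH : ∀ Q, IsOrth Q → trace (Q * H) ≤ trace H) (w : Fin d → ℝ) : 0 ≤ w ⬝ᵥ (H *ᵥ w) := by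
  rcases eq_or_ne w 0 with rfl | hw
  · simp
  have hpos : 0 < w ⬝ᵥ w := by simpa using dotProduct_star_self_pos_iff.2 hw
  have := hH _ (isOrth_householder w)
  rw [trace_householder_mul] at this
  exact (mul_nonneg_iff_of_pos_left (by positivity : (0 : ℝ) < 2 / (w ⬝ᵥ w))).1 (by linarith)

/-- Testing against the rotation `householder eⱼ * householder (eⱼ + t eᵢ)` gives
`t (Hᵢⱼ - Hⱼᵢ) ≤ t² (Hᵢᵢ + Hⱼⱼ)` for every `t`. -/
lemma isSymm_of_trace_mul_le (hH : ∀ Q, IsOrth Q → trace (Q * H) ≤ trace H) : H.IsSymm := by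
  ext i j
  rcases eq_or_ne i j with rfl | hij
  · rfl
  refine (sub_eq_zero.1 (eq_zero_of_forall_mul_le_sq_mul (K := H i i + H j j) fun t => ?_)).symm
  set e : Fin d → ℝ := Pi.single j 1
  set w : Fin d → ℝ := Pi.single j 1 + t • Pi.single i 1
  have hw : w ⬝ᵥ w = 1 + t ^ 2 := by
    simp only [w, dotProduct_add, dotProduct_smul, dotProduct_single, Pi.add_apply, Pi.smul_apply,
      Pi.single_eq_same, Pi.single_eq_of_ne hij, Pi.single_eq_of_ne hij.symm, smul_eq_mul]
    ring
  have := hH _ (isOrth_mul (isOrth_householder e) (isOrth_householder w))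
  rw [trace_householder_mul_householder_mul] at this
  simp only [e, w, hw, dotProduct_single, single_dotProduct, Pi.single_eq_same, Pi.single_eq_of_ne,
    ne_eq, hij, not_false_eq_true, mul_one, one_mul, mul_zero, add_zero, div_one, mulVec_single,
    MulOpposite.op_one, one_smul, col_apply, mulVec_add, mulVec_smul, dotProduct_add,
    add_dotProduct, smul_dotProduct, dotProduct_smul, smul_eq_mul] at this
  have ht : 0 < 1 + t ^ 2 := by positivity
  field_simp at this
  rw [transpose_apply]
  linarith

end TraceMaximal

section SingularValue
variable {n : Type*} [Fintype n]

lemma sigmaMin_le {β : Type*} [Fintype β] (M : Matrix n β ℝ) {u : n → ℝ} (hu : vnorm u = 1) :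
    sigmaMin M ≤ vnorm (u ᵥ* M) :=
  csInf_le ⟨0, by rintro r ⟨w, -, rfl⟩; exact vnorm_nonneg _⟩ ⟨u, hu, rfl⟩

lemma sigmaMin_mul_le_abs [DecidableEq n] {U H : Matrix n n ℝ} (hU : Uᵀ * U = 1) (hH : Hᵀ = H)
    {p : n → ℝ} (hp : vnorm p = 1) {c : ℝ} (hc : H *ᵥ p = c • p) : sigmaMin (U * H) ≤ |c| := by
  have hz : vnorm (U *ᵥ p) = 1 := by rw [vnorm_mulVec_of_transpose_mul_self hU, hp]
  have hzM : (U *ᵥ p) ᵥ* (U * H) = c • p := by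
    rw [← vecMul_vecMul, ← mulVec_transpose U, mulVec_mulVec, hU, one_mulVec, ← mulVec_transpose,
      hH, hc]
  simpa [hzM, vnorm_smul, hp] using sigmaMin_le (U * H) hz

end SingularValue

section Polar
variable {d : ℕ} {X U : Matrix (Fin d) (Fin d) ℝ}

lemma frob_sub_sq_of_isOrth {R : Matrix (Fin d) (Fin d) ℝ} (hR : IsOrth R)
    (X : Matrix (Fin d) (Fin d) ℝ) : frob (X - R) ^ 2 = frob X ^ 2 - 2 * trace (Rᵀ * X) + d := by
  have htr : trace (Xᵀ * R) = trace (Rᵀ * X) := by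
    rw [← trace_transpose, transpose_mul, transpose_transpose]
  rw [frob_sq, frob_sq, transpose_sub, sub_mul, mul_sub, mul_sub,
    hR.1, trace_sub, trace_sub, trace_sub, htr, trace_one, Fintype.card_fin]
  ring

lemma IsPolar.trace_mul_le (hP : IsPolar X U) {Q : Matrix (Fin d) (Fin d) ℝ} (hQ : IsOrth Q) :
    trace (Q * (Uᵀ * X)) ≤ trace (Uᵀ * X) := by
  have hR : IsOrth (U * Qᵀ) := isOrth_mul hP.1 hQ.transpose
  have h := pow_le_pow_left₀ (frob_nonneg _) (hP.2 _ hR) 2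
  rw [frob_sub_sq_of_isOrth hP.1, frob_sub_sq_of_isOrth hR, transpose_mul, transpose_transpose,
    Matrix.mul_assoc] at h
  linarith

lemma IsPolar.isSymm (hP : IsPolar X U) : (Uᵀ * X).IsSymm :=
  isSymm_of_trace_mul_le fun _ => hP.trace_mul_le

lemma IsPolar.posSemidef (hP : IsPolar X U) : (Uᵀ * X).PosSemidef := by
  refine posSemidef_iff_dotProduct_mulVec.2 ⟨?_, fun w => ?_⟩
  · rw [IsHermitian, conjTranspose_eq_transpose_of_trivial, hP.isSymm.eq]
  · simpa using dotProduct_mulVec_self_nonneg_of_trace_mul_le (fun _ => hP.trace_mul_le) w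

lemma IsPolar.exists_diagonalization (hP : IsPolar X U) :
    ∃ (P : Matrix (Fin d) (Fin d) ℝ) (lam : Fin d → ℝ),
      IsOrth P ∧ Uᵀ * X = P * diagonal lam * Pᵀ ∧ ∀ k, sigmaMin X ≤ lam k := by
  have hH := hP.posSemidef
  have hmem := hH.1.eigenvectorUnitary.2
  have horth : IsOrth (hH.1.eigenvectorUnitary : Matrix (Fin d) (Fin d) ℝ) := by
    rw [IsOrth, ← conjTranspose_eq_transpose_of_trivial, ← star_eq_conjTranspose]
    exact ⟨mem_unitaryGroup_iff'.1 hmem, mem_unitaryGroup_iff.1 hmem⟩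
  refine ⟨hH.1.eigenvectorUnitary, hH.1.eigenvalues, horth, ?_, fun k => ?_⟩
  · simpa [Unitary.conjStarAlgAut_apply, star_eq_conjTranspose] using hH.1.spectral_theorem
  · have hX : X = U * (Uᵀ * X) := by rw [← Matrix.mul_assoc, hP.1.2, Matrix.one_mul]
    have := sigmaMin_mul_le_abs hP.1.1 hP.isSymm.eq (by simp [vnorm_eq_norm])
      (hH.1.mulVec_eigenvectorBasis k)
    rwa [← hX, abs_of_nonneg (hH.eigenvalues_nonneg k)] at this

end Polar

section Sylvester
variable {d : ℕ}

lemma sylvester_eq_of_isPolar {X Y U V : Matrix (Fin d) (Fin d) ℝ} (hU : IsPolar X U)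
    (hV : IsPolar Y V) :
    (Uᵀ * X) * (1 - Uᵀ * V) + (1 - Uᵀ * V) * (Vᵀ * Y) = Uᵀ * (X - Y) - (X - Y)ᵀ * V := by
  have hXt : Xᵀ * V = (Uᵀ * X) * (Uᵀ * V) := by
    rw [← hU.isSymm.eq, transpose_mul, transpose_transpose, Matrix.mul_assoc,
      ← Matrix.mul_assoc U, hU.1.2, Matrix.one_mul]
  have hYt : Yᵀ * V = Vᵀ * Y := by rw [← hV.isSymm.eq, transpose_mul, transpose_transpose]
  have hY : Uᵀ * Y = (Uᵀ * V) * (Vᵀ * Y) := by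
    rw [Matrix.mul_assoc, ← Matrix.mul_assoc V, hV.1.2, Matrix.one_mul]
  rw [transpose_sub, Matrix.sub_mul Xᵀ, Matrix.mul_sub Uᵀ X, hXt, hYt, hY]
  simp only [Matrix.mul_sub, Matrix.sub_mul, Matrix.mul_one, Matrix.one_mul]
  abel

lemma entry_eq_div_of_diagonal_sylvester {lam mu : Fin d → ℝ} (hpos : ∀ i j, 0 < lam i + mu j)
    {Z C : Matrix (Fin d) (Fin d) ℝ} (hZ : diagonal lam * Z + Z * diagonal mu = C) :
    Z = Matrix.of fun i j => C i j / (lam i + mu j) := by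
  ext i j
  rw [of_apply, eq_div_iff (hpos i j).ne', ← hZ]
  simp only [Matrix.add_apply, diagonal_mul, mul_diagonal]
  ring

theorem norm_le_and_frob_le_of_sylvester {H K Z C P Q : Matrix (Fin d) (Fin d) ℝ}
    {lam mu : Fin d → ℝ} {a b : ℝ} (hP : IsOrth P) (hH : H = P * diagonal lam * Pᵀ)
    (hlam : ∀ i, a ≤ lam i) (hQ : IsOrth Q) (hK : K = Q * diagonal mu * Qᵀ) (hmu : ∀ j, b ≤ mu j)
    (hab : 0 < a + b) (hZ : H * Z + Z * K = C) :
    ‖Z‖ ≤ ‖C‖ / (a + b) ∧ frob Z ≤ frob C / (a + b) := by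
  have hdiag : diagonal lam * (Pᵀ * Z * Q) + (Pᵀ * Z * Q) * diagonal mu = Pᵀ * C * Q := by
    have hPH : ∀ M, Pᵀ * (H * M) = diagonal lam * (Pᵀ * M) := fun M => by
      rw [hH, ← Matrix.mul_assoc, ← Matrix.mul_assoc, ← Matrix.mul_assoc, hP.1, Matrix.one_mul,
        Matrix.mul_assoc]
    have hKQ : K * Q = Q * diagonal mu := by rw [hK, Matrix.mul_assoc, hQ.1, Matrix.mul_one]
    rw [← hZ]
    simp only [Matrix.mul_add, Matrix.add_mul, Matrix.mul_assoc, hPH, hKQ]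
  have hZ' := entry_eq_div_of_diagonal_sylvester (fun i j => by linarith [hlam i, hmu j]) hdiag
  have hZPQ : Z = P * (Pᵀ * Z * Q) * Qᵀ := by
    simp only [← Matrix.mul_assoc, hP.2, Matrix.one_mul]
    rw [Matrix.mul_assoc, hQ.2, Matrix.mul_one]
  constructor
  · calc ‖Z‖ ≤ ‖Pᵀ * Z * Q‖ := by
          conv_lhs => rw [hZPQ]
          exact norm_mul_mul_le_of_isOrth hP hQ.transpose _
      _ ≤ ‖Pᵀ * C * Q‖ / (a + b) := by
          rw [hZ']
          exact norm_of_div_add_le hlam hmu hab _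
      _ ≤ ‖C‖ / (a + b) := by
          gcongr
          exact norm_mul_mul_le_of_isOrth hP.transpose hQ _
  · calc frob Z = frob (Pᵀ * Z * Q) := by rw [frob_mul_mul_of_isOrth hP.transpose hQ]
      _ ≤ frob (Pᵀ * C * Q) / (a + b) := by
          rw [hZ']
          exact frob_of_div_add_le hlam hmu hab _
      _ = frob C / (a + b) := by rw [frob_mul_mul_of_isOrth hP.transpose hQ]

end Sylvester

/-- Lemma 5.3: Lipschitz continuity of the polar factor map, in operator
norm and in Frobenius norm. -/
theorem polar_lipschitz (d : ℕ) (X Y : Matrix (Fin d) (Fin d) ℝ)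
    (h : 0 < sigmaMin X + sigmaMin Y)
    (RX RY : Matrix (Fin d) (Fin d) ℝ) (hRX : IsPolar X RX) (hRY : IsPolar Y RY) :
    opNorm (RX - RY) ≤ 2 * opNorm (X - Y) / (sigmaMin X + sigmaMin Y) ∧
    frob (RX - RY) ≤ 2 * frob (X - Y) / (sigmaMin X + sigmaMin Y) := by
  obtain ⟨P, lam, hP, hH, hlam⟩ := hRX.exists_diagonalization
  obtain ⟨Q, mu, hQ, hK, hmu⟩ := hRY.exists_diagonalization
  obtain ⟨hnorm, hfrob⟩ :=
    norm_le_and_frob_le_of_sylvester hP hH hlam hQ hK hmu h (sylvester_eq_of_isPolar hRX hRY)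
  have hdiff : RX - RY = RX * (1 - RXᵀ * RY) := by
    rw [Matrix.mul_sub, Matrix.mul_one, ← Matrix.mul_assoc, hRX.1.2, Matrix.one_mul]
  rw [opNorm_eq_norm, opNorm_eq_norm, hdiff, frob_mul_of_transpose_mul_self hRX.1.1]
  constructor
  · calc ‖RX * (1 - RXᵀ * RY)‖ ≤ ‖1 - RXᵀ * RY‖ :=
          (l2_opNorm_mul _ _).trans (mul_le_of_le_one_left (norm_nonneg _) hRX.1.norm_le_one)
      _ ≤ ‖RXᵀ * (X - Y) - (X - Y)ᵀ * RY‖ / (sigmaMin X + sigmaMin Y) := hnorm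
      _ ≤ 2 * ‖X - Y‖ / (sigmaMin X + sigmaMin Y) := by
          gcongr
          exact norm_transpose_mul_sub_le hRX.1 hRY.1 _
  · calc frob (1 - RXᵀ * RY)
        ≤ frob (RXᵀ * (X - Y) - (X - Y)ᵀ * RY) / (sigmaMin X + sigmaMin Y) := hfrob
      _ ≤ 2 * frob (X - Y) / (sigmaMin X + sigmaMin Y) := by
          gcongr
          exact frob_transpose_mul_sub_le hRX.1 hRY.1 _

end GOPP
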